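/- arXiv:1805.09661 — 2 statements merged into one kernel-verified Lean document; each statement's English description precedes it below -/
import Mathlib

section
/- For every integer k ≥ 2 there exists an integer N (depending on k) such that every connected simple graph G on n ≥ N vertices satisfies λ_k(D(G)) ≥ −2, where λ_k(D(G)) is the k-th largest distance eigenvalue of G. -/
open Finset SimpleGraph

/-- The distance matrix of a simple graph on `Fin n`, as a real matrix: the
`(i,j)` entry is the graph distance `d_G(i,j)`. -/
noncomputable def distMatrix {n : ℕ} (G : SimpleGraph (Fin n)) :
    Matrix (Fin n) (Fin n) ℝ :=
  fun i j => (G.dist i j : ℝ)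

/-- The eigenvalues of the distance matrix, listed in decreasing order. -/
noncomputable def distEigList {n : ℕ} (G : SimpleGraph (Fin n)) : List ℝ :=
  if h : (distMatrix G).IsHermitian then
    (List.ofFn h.eigenvalues).insertionSort (· ≥ ·)
  else []

/-- `distEig G k` is the `k`-th largest distance eigenvalue `λ_k(D(G))` (`1`-indexed). -/
noncomputable def distEig {n : ℕ} (G : SimpleGraph (Fin n)) (k : ℕ) : ℝ :=
  (distEigList G).getD (k - 1) 0

/-- `S_k(D(G))`, the sum of the `k` largest distance eigenvalues. -/
noncomputable def distEigSum {n : ℕ} (G : SimpleGraph (Fin n)) (k : ℕ) : ℝ :=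
  ((distEigList G).take k).sum

/-- `G` has independence number at most `s`: every set of pairwise
nonadjacent vertices has at most `s` elements. -/
def IndepNumLE {V : Type*} (G : SimpleGraph V) (s : ℕ) : Prop :=
  ∀ S : Finset V, (∀ u ∈ S, ∀ v ∈ S, u ≠ v → ¬ G.Adj u v) → S.card ≤ s

/-!
By the min-max principle it suffices to exhibit `k` linearly independent vectors spanning a
space on which `xᵀ D x ≥ -2 xᵀ x`; all of them are built from the incidence vectors
`e u - e w` of edges `uw`.

Take a maximum matching. If it is large, Ramsey's theorem yields `k + 1` of its edges `u_a w_a`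
whose incidence vectors `x_a` have "cross distances" `x_aᵀ D x_b`, `a ≠ b`, all equal to one
value `c ∈ [-2, 2]`; the `k` differences `x_a - x_0` have Gram matrix `2 (J + I)` and `D`-form
`-(2 + c) (J + I)`. If it is small, the unmatched vertices form a large independent set,
each of them adjacent to one of the few matched vertices, so some vertex `w` has `k` pairwise
nonadjacent neighbours `v_i`; the vectors `e v_i - e w` have Gram matrix `J + I` and
`D`-form `-2 I`.
-/

open Matrix Module

universe u

namespace Matrix.IsHermitian

variable {ι : Type*} [Fintype ι] [DecidableEq ι] {A : Matrix ι ι ℝ} (hA : A.IsHermitian)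

theorem dotProduct_mulVec_eq_sum_eigenvalues (x : ι → ℝ) :
    x ⬝ᵥ (A *ᵥ x) = ∑ i, hA.eigenvalues i * (x ᵥ* hA.eigenvectorUnitary) i ^ 2 := by
  conv_lhs => rw [hA.spectral_theorem]
  rw [Unitary.conjStarAlgAut_apply, ← mulVec_mulVec, ← mulVec_mulVec, dotProduct_mulVec,
    star_eq_conjTranspose, conjTranspose_eq_transpose_of_trivial, mulVec_transpose]
  simp [dotProduct, mulVec_diagonal, sq, mul_left_comm]

theorem dotProduct_self_eq_sum_sq (x : ι → ℝ) :
    x ⬝ᵥ x = ∑ i, (x ᵥ* (hA.eigenvectorUnitary : Matrix ι ι ℝ)) i ^ 2 := by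
  set U : Matrix ι ι ℝ := (hA.eigenvectorUnitary : Matrix ι ι ℝ)
  have hU : U * Uᵀ = 1 := by
    simpa [U, star_eq_conjTranspose] using Unitary.coe_mul_star_self hA.eigenvectorUnitary
  have : x ᵥ* U ⬝ᵥ (x ᵥ* U) = x ⬝ᵥ x := by
    rw [← dotProduct_mulVec, ← vecMul_transpose, vecMul_vecMul, hU, vecMul_one]
  rw [← this]
  simp only [dotProduct, sq]

/-- One half of the Courant–Fischer min-max principle. -/
theorem finrank_le_card_eigenvalues_ge {c : ℝ} {W : Submodule ℝ (ι → ℝ)}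
    (hW : ∀ x ∈ W, c * (x ⬝ᵥ x) ≤ x ⬝ᵥ (A *ᵥ x)) :
    finrank ℝ W ≤ #{i | c ≤ hA.eigenvalues i} := by
  set U : Matrix ι ι ℝ := (hA.eigenvectorUnitary : Matrix ι ι ℝ)
  by_contra! hlt
  -- a vector of `W` with no component along the eigenvectors of eigenvalue `≥ c`
  let L : W →ₗ[ℝ] ({i // c ≤ hA.eigenvalues i} → ℝ) :=
    LinearMap.funLeft ℝ ℝ Subtype.val ∘ₗ U.vecMulLinear ∘ₗ W.subtype
  obtain ⟨⟨x, hxW⟩, hxL, hx0⟩ := Submodule.ne_bot_iff _ |>.mp <|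
    LinearMap.ker_ne_bot_of_finrank_lt (f := L) (by simpa [Fintype.card_subtype] using hlt)
  have hvanish : ∀ i, c ≤ hA.eigenvalues i → (x ᵥ* U) i = 0 := fun i hi =>
    congrFun hxL ⟨i, hi⟩
  have hx : x ≠ 0 := fun h => hx0 (Subtype.ext h)
  obtain ⟨i, hi⟩ : ∃ i, (x ᵥ* U) i ≠ 0 := by
    by_contra! h
    exact hx <| dotProduct_self_eq_zero.mp <| by simp [hA.dotProduct_self_eq_sum_sq, U, h]
  have := hW x hxW
  rw [hA.dotProduct_self_eq_sum_sq, hA.dotProduct_mulVec_eq_sum_eigenvalues, Finset.mul_sum] at this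
  refine this.not_gt (Finset.sum_lt_sum (fun j _ => ?_) ⟨i, Finset.mem_univ _, ?_⟩)
  · rcases le_or_gt c (hA.eigenvalues j) with hj | hj
    · simp [hvanish j hj, U]
    · exact mul_le_mul_of_nonneg_right hj.le (sq_nonneg _)
  · exact mul_lt_mul_of_pos_right (not_le.mp fun h => hi (hvanish i h)) (by positivity)

end Matrix.IsHermitian

section Pattern

/-! A family `y` has *pattern* `(α, β)` for a matrix `A` when
`y i ⬝ᵥ (A *ᵥ y j) = α + if i = j then β else 0`, i.e. its `A`-Gram matrix is `α J + β I`. -/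

variable {V ι : Type*} [Fintype V]

theorem sum_smul_dotProduct_mulVec_sum_smul [Fintype ι] (A : Matrix V V ℝ) (y : ι → V → ℝ)
    (a : ι → ℝ) :
    (∑ i, a i • y i) ⬝ᵥ (A *ᵥ ∑ i, a i • y i) = ∑ i, ∑ j, a i * a j * (y i ⬝ᵥ (A *ᵥ y j)) := by
  simp only [mulVec_sum, mulVec_smul, sum_dotProduct, dotProduct_sum, smul_dotProduct,
    dotProduct_smul, smul_eq_mul, Finset.mul_sum, mul_assoc]
  rw [Finset.sum_comm]
  exact Finset.sum_congr rfl fun i _ => Finset.sum_congr rfl fun j _ => mul_left_comm _ _ _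

variable [DecidableEq ι]

theorem sub_dotProduct_mulVec_sub_of_pattern {A : Matrix V V ℝ} {y : ι → V → ℝ} {α β : ℝ}
    (h : ∀ i j, y i ⬝ᵥ (A *ᵥ y j) = α + if i = j then β else 0) {i₀ i j : ι}
    (hi : i ≠ i₀) (hj : j ≠ i₀) :
    (y i - y i₀) ⬝ᵥ (A *ᵥ (y j - y i₀)) = β + if i = j then β else 0 := by
  rw [mulVec_sub, dotProduct_sub, sub_dotProduct, sub_dotProduct, h, h, h, h, if_neg hi,
    if_neg hj.symm, if_pos rfl]
  ring

theorem sub_dotProduct_sub_of_pattern {y : ι → V → ℝ} {γ δ : ℝ}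
    (h : ∀ i j, y i ⬝ᵥ y j = γ + if i = j then δ else 0) {i₀ i j : ι} (hi : i ≠ i₀) (hj : j ≠ i₀) :
    (y i - y i₀) ⬝ᵥ (y j - y i₀) = δ + if i = j then δ else 0 := by
  classical
  simpa using sub_dotProduct_mulVec_sub_of_pattern (A := 1) (y := y) (by simpa using h) hi hj

variable [Fintype ι]

theorem sum_sum_mul_mul_add_ite (a : ι → ℝ) (α β : ℝ) :
    ∑ i, ∑ j, a i * a j * (α + if i = j then β else 0) = α * (∑ i, a i) ^ 2 + β * ∑ i, a i ^ 2 := by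
  simp [mul_add, Finset.sum_add_distrib, ← Finset.mul_sum, ← Finset.sum_mul, sq]
  ring

theorem sum_smul_dotProduct_mulVec_sum_smul_of_pattern {A : Matrix V V ℝ} {y : ι → V → ℝ}
    {α β : ℝ} (h : ∀ i j, y i ⬝ᵥ (A *ᵥ y j) = α + if i = j then β else 0) (a : ι → ℝ) :
    (∑ i, a i • y i) ⬝ᵥ (A *ᵥ ∑ i, a i • y i) = α * (∑ i, a i) ^ 2 + β * ∑ i, a i ^ 2 := by
  simp only [sum_smul_dotProduct_mulVec_sum_smul, h, sum_sum_mul_mul_add_ite]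

theorem sum_smul_dotProduct_sum_smul_of_pattern {y : ι → V → ℝ} {γ δ : ℝ}
    (h : ∀ i j, y i ⬝ᵥ y j = γ + if i = j then δ else 0) (a : ι → ℝ) :
    (∑ i, a i • y i) ⬝ᵥ ∑ i, a i • y i = γ * (∑ i, a i) ^ 2 + δ * ∑ i, a i ^ 2 := by
  classical
  simpa using sum_smul_dotProduct_mulVec_sum_smul_of_pattern (A := 1) (y := y) (by simpa using h) a

theorem linearIndependent_of_dotProduct_eq {y : ι → V → ℝ} {γ δ : ℝ}
    (h : ∀ i j, y i ⬝ᵥ y j = γ + if i = j then δ else 0) (hγ : 0 ≤ γ) (hδ : 0 < δ) :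
    LinearIndependent ℝ y := by
  rw [Fintype.linearIndependent_iff]
  intro a ha i
  have hnorm := sum_smul_dotProduct_sum_smul_of_pattern h a
  rw [ha, dotProduct_zero] at hnorm
  have hsq : ∑ i, a i ^ 2 = 0 := by
    nlinarith [sq_nonneg (∑ i, a i), Finset.sum_nonneg fun i (_ : i ∈ univ) => sq_nonneg (a i)]
  exact pow_eq_zero_iff two_ne_zero |>.mp <|
    (Finset.sum_eq_zero_iff_of_nonneg fun i _ => sq_nonneg (a i)).mp hsq i (Finset.mem_univ i)

theorem Matrix.IsHermitian.card_le_card_eigenvalues_ge_of_pattern [DecidableEq V]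
    {A : Matrix V V ℝ} (hA : A.IsHermitian) {y : ι → V → ℝ} {c α β γ δ : ℝ}
    (hAy : ∀ i j, y i ⬝ᵥ (A *ᵥ y j) = α + if i = j then β else 0)
    (hy : ∀ i j, y i ⬝ᵥ y j = γ + if i = j then δ else 0) (hγ : 0 ≤ γ) (hδ : 0 < δ)
    (hα : c * γ ≤ α) (hβ : c * δ ≤ β) :
    Fintype.card ι ≤ #{i | c ≤ hA.eigenvalues i} := by
  rw [← finrank_span_eq_card (linearIndependent_of_dotProduct_eq hy hγ hδ)]
  refine hA.finrank_le_card_eigenvalues_ge fun x hx => ?_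
  obtain ⟨a, rfl⟩ := Submodule.mem_span_range_iff_exists_fun ℝ |>.mp hx
  rw [sum_smul_dotProduct_sum_smul_of_pattern hy,
    sum_smul_dotProduct_mulVec_sum_smul_of_pattern hAy]
  nlinarith [sq_nonneg (∑ i, a i), Finset.sum_nonneg fun i (_ : i ∈ univ) => sq_nonneg (a i)]

end Pattern

theorem List.countP_ofFn {α : Type*} {n : ℕ} (f : Fin n → α) (p : α → Bool) :
    (List.ofFn f).countP p = #{i | p (f i)} := by
  induction n with
  | zero => simp
  | succ n ih =>
    rw [List.ofFn_succ, List.countP_cons, ih, Fin.card_filter_univ_succ' (fun i => p (f i) = true)]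
    split_ifs <;> simp [add_comm]

theorem List.Pairwise.le_getD_of_lt_countP {α : Type*} [LinearOrder α] {l : List α}
    (hl : l.Pairwise (· ≥ ·)) {c : α} {i : ℕ} (hi : i < l.countP (c ≤ ·)) (d : α) :
    c ≤ l.getD i d := by
  induction l generalizing i with
  | nil => simp at hi
  | cons a t ih =>
    rw [List.pairwise_cons] at hl
    rcases i with _ | i
    · obtain ⟨x, hx, hcx⟩ := List.countP_pos_iff.mp (by omega : 0 < (a :: t).countP (c ≤ ·))
      rcases List.mem_cons.mp hx with rfl | hx
      · simpa using hcx
      · simpa using (decide_eq_true_iff.mp hcx).trans (hl.1 x hx)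
    · rw [List.countP_cons] at hi
      simpa using ih hl.2 (by split_ifs at hi <;> omega)

section DistanceEigenvalues

variable {n : ℕ} (G : SimpleGraph (Fin n))

theorem isHermitian_distMatrix : (distMatrix G).IsHermitian := by
  ext i j
  simp [distMatrix, SimpleGraph.dist_comm]

theorem le_distEig_of_le_card {c : ℝ} {k : ℕ} (hk : 0 < k)
    (h : k ≤ #{i | c ≤ (isHermitian_distMatrix G).eigenvalues i}) : c ≤ distEig G k := by
  rw [distEig, distEigList, dif_pos (isHermitian_distMatrix G)]
  refine (List.pairwise_insertionSort _ _).le_getD_of_lt_countP ?_ 0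
  rw [(List.perm_insertionSort _ _).countP_eq, List.countP_ofFn]
  simpa using Nat.sub_one_lt_of_le hk h

theorem le_distEig_of_pattern {ι : Type*} [Fintype ι] [DecidableEq ι] [Nonempty ι]
    {y : ι → Fin n → ℝ} {c α β γ δ : ℝ}
    (hDy : ∀ i j, y i ⬝ᵥ (distMatrix G *ᵥ y j) = α + if i = j then β else 0)
    (hy : ∀ i j, y i ⬝ᵥ y j = γ + if i = j then δ else 0) (hγ : 0 ≤ γ) (hδ : 0 < δ)
    (hα : c * γ ≤ α) (hβ : c * δ ≤ β) :
    c ≤ distEig G (Fintype.card ι) :=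
  le_distEig_of_le_card G Fintype.card_pos <|
    (isHermitian_distMatrix G).card_le_card_eigenvalues_ge_of_pattern hDy hy hγ hδ hα hβ

end DistanceEigenvalues

section TestVectors

variable {V : Type*} [Fintype V] [DecidableEq V]

theorem single_sub_single_dotProduct_mulVec (A : Matrix V V ℝ) (u w u' w' : V) :
    (Pi.single u 1 - Pi.single w 1 : V → ℝ) ⬝ᵥ (A *ᵥ (Pi.single u' 1 - Pi.single w' 1)) =
      A u u' - A u w' - A w u' + A w w' := by
  simp only [mulVec_sub, mulVec_single_one, dotProduct_sub, sub_dotProduct, single_dotProduct,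
    one_mul, col_apply]
  ring

theorem single_sub_single_dotProduct (u w u' w' : V) :
    (Pi.single u 1 - Pi.single w 1 : V → ℝ) ⬝ᵥ (Pi.single u' 1 - Pi.single w' 1) =
      (if u = u' then 1 else 0) - (if u = w' then 1 else 0) - (if w = u' then 1 else 0) +
        if w = w' then 1 else 0 := by
  simpa [one_apply] using single_sub_single_dotProduct_mulVec 1 u w u' w'

end TestVectors

theorem SimpleGraph.dist_eq_two_of_adj_of_adj {V : Type*} {G : SimpleGraph V} {u v w : V}
    (huv : u ≠ v) (hnadj : ¬G.Adj u v) (hu : G.Adj w u) (hv : G.Adj w v) : G.dist u v = 2 := by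
  have hw : w ∈ G.commonNeighbors u v := G.mem_commonNeighbors.mpr ⟨hu.symm, hv.symm⟩
  simp [SimpleGraph.dist, SimpleGraph.edist_eq_two_iff.mpr ⟨huv, hnadj, w, hw⟩]

section Combinatorics

variable {V : Type*} [DecidableEq V]

/-- Ramsey's theorem for colourings of pairs, by the Erdős–Szekeres induction on `∑ i, b i`. -/
theorem exists_monochromatic_subset {κ : Type*} [Fintype κ] [DecidableEq κ] (b : κ → ℕ) :
    ∃ R : ℕ, ∀ {α : Type u} [DecidableEq α] (f : Sym2 α → κ) (s : Finset α), R ≤ #s →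
      ∃ i, ∃ t ⊆ s, #t = b i ∧ ∀ x ∈ t, ∀ y ∈ t, x ≠ y → f s(x, y) = i := by
  induction hb : ∑ i, b i using Nat.strong_induction_on generalizing b with
  | _ m ih =>
    by_cases h0 : ∃ i, b i = 0
    · obtain ⟨i, hi⟩ := h0
      exact ⟨0, fun f s _ => ⟨i, ∅, empty_subset s, by simp [hi], by simp⟩⟩
    push Not at h0
    have hlt : ∀ i, ∑ j, Function.update b i (b i - 1) j < m := fun i => by
      rw [← hb, sum_update_of_mem (mem_univ i), sum_eq_add_sum_sdiff_singleton_of_mem (mem_univ i)]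
      have := h0 i
      omega
    choose R hR using fun i => ih _ (hlt i) (Function.update b i (b i - 1)) rfl
    refine ⟨∑ i, R i + 1, fun f s hs => ?_⟩
    obtain ⟨v, hv⟩ : s.Nonempty := card_pos.mp (by omega)
    obtain ⟨i, hi⟩ : ∃ i, R i ≤ #{x ∈ s.erase v | f s(v, x) = i} := by
      by_contra! h
      have : Nonempty κ := ⟨f s(v, v)⟩
      have := Finset.sum_lt_sum_of_nonempty univ_nonempty fun i _ => h i
      rw [← card_eq_sum_card_fiberwise fun x _ => mem_univ (f s(v, x)),
        card_erase_of_mem hv] at this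
      omega
    obtain ⟨j, t, hts, htcard, htmono⟩ := hR i f _ hi
    have hts' : t ⊆ s.erase v := hts.trans (filter_subset _ _)
    by_cases hji : j = i
    · subst hji
      have hvt : v ∉ t := fun h => by simpa using hts' h
      refine ⟨j, insert v t, insert_subset hv (hts'.trans (erase_subset _ _)), ?_, ?_⟩
      · rw [card_insert_of_notMem hvt, htcard, Function.update_self]
        have := h0 j
        omega
      · intro x hx y hy hxy
        rcases mem_insert.mp hx with hxv | hx <;> rcases mem_insert.mp hy with hyv | hy
        · exact absurd (hxv.trans hyv.symm) hxy
        · rw [hxv]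
          exact (mem_filter.mp (hts hy)).2
        · rw [hyv, Sym2.eq_swap]
          exact (mem_filter.mp (hts hx)).2
        · exact htmono x hx y hy hxy
    · exact ⟨j, t, hts'.trans (erase_subset _ _), by rwa [Function.update_of_ne hji] at htcard,
        htmono⟩

def IsOrientedMatching (G : SimpleGraph V) (P : Finset (V × V)) : Prop :=
  (∀ p ∈ P, G.Adj p.1 p.2) ∧ (P : Set (V × V)).PairwiseDisjoint fun p => ({p.1, p.2} : Finset V)

theorem IsOrientedMatching.subset {G : SimpleGraph V} {P Q : Finset (V × V)}
    (hP : IsOrientedMatching G P) (hQ : Q ⊆ P) : IsOrientedMatching G Q :=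
  ⟨fun p hp => hP.1 p (hQ hp), hP.2.subset (coe_subset.mpr hQ)⟩

theorem IsOrientedMatching.single_sub_single_dotProduct [Fintype V] {G : SimpleGraph V}
    {P : Finset (V × V)} (hP : IsOrientedMatching G P) (p q : P) :
    (Pi.single p.1.1 1 - Pi.single p.1.2 1 : V → ℝ) ⬝ᵥ (Pi.single q.1.1 1 - Pi.single q.1.2 1) =
      0 + if p = q then 2 else 0 := by
  rw [_root_.single_sub_single_dotProduct]
  by_cases hpq : p = q
  · subst hpq
    norm_num [(hP.1 _ p.2).ne, (hP.1 _ p.2).ne.symm]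
  · have := hP.2 p.2 q.2 (Subtype.coe_injective.ne hpq)
    simp only [Function.onFun, disjoint_insert_left, disjoint_insert_right, disjoint_singleton,
      mem_insert, mem_singleton, not_or] at this
    rw [if_neg (Ne.symm this.1.1), if_neg this.2.1, if_neg (Ne.symm this.1.2), if_neg this.2.2,
      if_neg hpq]
    norm_num

theorem exists_isOrientedMatching_not_adj [Fintype V] (G : SimpleGraph V) :
    ∃ P, IsOrientedMatching G P ∧
      ∀ a b, a ∉ P.biUnion (fun p => {p.1, p.2}) → b ∉ P.biUnion (fun p => {p.1, p.2}) →
        ¬G.Adj a b := by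
  classical
  obtain ⟨P, hP, hmax⟩ := exists_max_image {P | IsOrientedMatching G P} card
    ⟨∅, by simp [IsOrientedMatching]⟩
  rw [mem_filter] at hP
  refine ⟨P, hP.2, fun a b ha hb hab => ?_⟩
  simp only [mem_biUnion, mem_insert, mem_singleton, not_exists, not_and] at ha hb
  have hnew : IsOrientedMatching G (insert (a, b) P) := by
    refine ⟨fun p hp => ?_, ?_⟩
    · rcases mem_insert.mp hp with rfl | hp
      exacts [hab, hP.2.1 p hp]
    · rw [coe_insert]
      refine hP.2.2.insert fun q hq _ => ?_
      simp only [disjoint_insert_left, disjoint_insert_right, disjoint_singleton, mem_insert,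
        mem_singleton, ne_eq]
      grind
  have hab' : (a, b) ∉ P := fun h => ha _ h (Or.inl rfl)
  have := hmax _ (mem_filter.mpr ⟨mem_univ _, hnew⟩)
  rw [card_insert_of_notMem hab'] at this
  omega

theorem exists_star_of_not_adj [Fintype V] [Nontrivial V] {G : SimpleGraph V}
    (hG : G.Connected) {S : Finset V} (hS : ∀ a b, a ∉ S → b ∉ S → ¬G.Adj a b) {k : ℕ}
    (hk : #S * k < #Sᶜ) :
    ∃ w, ∃ L : Finset V, #L = k ∧ (∀ v ∈ L, G.Adj w v) ∧ ∀ u ∈ L, ∀ v ∈ L, ¬G.Adj u v := by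
  choose g hg using hG.preconnected.exists_adj_of_nontrivial
  have hgS : ∀ a ∈ Sᶜ, g a ∈ S := fun a ha => by
    by_contra h
    exact hS a (g a) (mem_compl.mp ha) h (hg a)
  obtain ⟨w, -, hw⟩ := exists_lt_card_fiber_of_mul_lt_card_of_maps_to hgS hk
  obtain ⟨L, hLsub, hL⟩ := exists_subset_card_eq hw.le
  refine ⟨w, L, hL, fun v hv => ?_, fun u hu v hv => ?_⟩
  · obtain ⟨-, rfl⟩ := mem_filter.mp (hLsub hv)
    exact (hg v).symm
  · exact hS u v (mem_compl.mp (mem_filter.mp (hLsub hu)).1)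
      (mem_compl.mp (mem_filter.mp (hLsub hv)).1)

end Combinatorics

section CrossDistance

variable {V : Type*} (G : SimpleGraph V)

noncomputable def crossDist (p q : V × V) : ℤ :=
  G.dist p.1 q.1 - G.dist p.1 q.2 - G.dist p.2 q.1 + G.dist p.2 q.2

theorem crossDist_comm (p q : V × V) : crossDist G p q = crossDist G q p := by
  simp only [crossDist, G.dist_comm (u := p.1), G.dist_comm (u := p.2)]
  ring

variable {G}

theorem crossDist_self {p : V × V} (hp : G.Adj p.1 p.2) : crossDist G p p = -2 := by
  simp [crossDist, dist_eq_one_iff_adj.mpr hp, dist_eq_one_iff_adj.mpr hp.symm]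

theorem crossDist_mem_Icc (hG : G.Connected) {p : V × V} (hp : G.Adj p.1 p.2) (q : V × V) :
    crossDist G p q ∈ Set.Icc (-2) 2 := by
  have h12 := dist_eq_one_iff_adj.mpr hp
  have h21 := dist_eq_one_iff_adj.mpr hp.symm
  have := hG.dist_triangle (u := p.1) (v := p.2) (w := q.1)
  have := hG.dist_triangle (u := p.2) (v := p.1) (w := q.1)
  have := hG.dist_triangle (u := p.1) (v := p.2) (w := q.2)
  have := hG.dist_triangle (u := p.2) (v := p.1) (w := q.2)
  simp only [crossDist, Set.mem_Icc]
  omega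

theorem exists_subset_crossDist_eq (m : ℕ) :
    ∃ R : ℕ, ∀ {V : Type u} [DecidableEq V] {G : SimpleGraph V}, G.Connected →
      ∀ P : Finset (V × V), (∀ p ∈ P, G.Adj p.1 p.2) → R ≤ #P →
        ∃ T ⊆ P, #T = m ∧ ∃ c ≤ (2 : ℤ), ∀ p ∈ T, ∀ q ∈ T, p ≠ q → crossDist G p q = c := by
  -- clamping to `[-2, 2]` makes the colours finitely many and loses nothing on edges
  obtain ⟨R, hR⟩ := exists_monochromatic_subset (κ := Set.Icc (-2 : ℤ) 2) fun _ => m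
  refine ⟨R, fun {V} _ G hG P hP hRP => ?_⟩
  let f : Sym2 (V × V) → Set.Icc (-2 : ℤ) 2 := Sym2.lift
    ⟨fun p q => Set.projIcc (-2) 2 (by norm_num) (crossDist G p q), fun p q => by
      simp only [crossDist_comm G p q]⟩
  obtain ⟨i, T, hTP, hT, hmono⟩ := hR f P hRP
  refine ⟨T, hTP, hT, i, i.2.2, fun p hp q hq hpq => ?_⟩
  have := congrArg Subtype.val (hmono p hp q hq hpq)
  simpa only [f, Sym2.lift_mk, Set.projIcc_of_mem _ (crossDist_mem_Icc hG (hP p (hTP hp)) q)]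
    using this

end CrossDistance

section DistanceEigenvalueBounds

variable {n : ℕ} (G : SimpleGraph (Fin n))

theorem single_sub_single_dotProduct_distMatrix (p q : Fin n × Fin n) :
    (Pi.single p.1 1 - Pi.single p.2 1 : Fin n → ℝ) ⬝ᵥ
      (distMatrix G *ᵥ (Pi.single q.1 1 - Pi.single q.2 1)) = crossDist G p q := by
  rw [single_sub_single_dotProduct_mulVec]
  simp [distMatrix, crossDist]

theorem neg_two_le_distEig_of_star (w : Fin n) {L : Finset (Fin n)} (hL : L.Nonempty)
    (hadj : ∀ v ∈ L, G.Adj w v) (hind : ∀ u ∈ L, ∀ v ∈ L, ¬G.Adj u v) :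
    -2 ≤ distEig G #L := by
  have : Nonempty L := hL.to_subtype
  have hw : ∀ v : L, (v : Fin n) ≠ w := fun v h => (hadj v v.2).ne h.symm
  let y : L → Fin n → ℝ := fun v => Pi.single (v : Fin n) 1 - Pi.single w 1
  have hDy : ∀ u v, y u ⬝ᵥ (distMatrix G *ᵥ y v) = 0 + if u = v then -2 else 0 := by
    intro u v
    simp only [y, single_sub_single_dotProduct_mulVec, distMatrix,
      dist_eq_one_iff_adj.mpr (hadj u u.2).symm, dist_eq_one_iff_adj.mpr (hadj v v.2),
      SimpleGraph.dist_self]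
    by_cases huv : u = v
    · subst huv
      norm_num
    · rw [dist_eq_two_of_adj_of_adj (Subtype.coe_injective.ne huv) (hind u u.2 v v.2)
        (hadj u u.2) (hadj v v.2)]
      norm_num [huv]
  have hy : ∀ u v, y u ⬝ᵥ y v = 1 + if u = v then 1 else 0 := by
    intro u v
    rw [single_sub_single_dotProduct, if_neg (hw u), if_neg (hw v).symm, if_pos rfl]
    by_cases huv : u = v
    · subst huv
      norm_num
    · rw [if_neg (Subtype.coe_injective.ne huv), if_neg huv]
      norm_num
  simpa using le_distEig_of_pattern G hDy hy zero_le_one one_pos (by norm_num) (by norm_num)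

theorem neg_two_le_distEig_of_isOrientedMatching {T : Finset (Fin n × Fin n)}
    (hT : IsOrientedMatching G T) (hcard : 2 ≤ #T) {c : ℤ} (hc : c ≤ 2)
    (hcross : ∀ p ∈ T, ∀ q ∈ T, p ≠ q → crossDist G p q = c) :
    -2 ≤ distEig G (#T - 1) := by
  let x : T → Fin n → ℝ := fun p => Pi.single p.1.1 1 - Pi.single p.1.2 1
  have hDx : ∀ p q, x p ⬝ᵥ (distMatrix G *ᵥ x q) = (c : ℝ) + if p = q then -2 - (c : ℝ) else 0 := by
    intro p q
    rw [single_sub_single_dotProduct_distMatrix]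
    by_cases hpq : p = q
    · subst hpq
      simp [crossDist_self (hT.1 _ p.2)]
    · simp [hpq, hcross p p.2 q q.2 (Subtype.coe_injective.ne hpq)]
  obtain ⟨p₀, hp₀⟩ : T.Nonempty := card_pos.mp (by omega)
  let y : {p : T // p ≠ ⟨p₀, hp₀⟩} → Fin n → ℝ := fun p => x p - x ⟨p₀, hp₀⟩
  have hDy : ∀ p q,
      y p ⬝ᵥ (distMatrix G *ᵥ y q) = (-2 - c : ℝ) + if p = q then -2 - (c : ℝ) else 0 :=
    fun p q => by
      simpa only [← Subtype.ext_iff] using sub_dotProduct_mulVec_sub_of_pattern hDx p.2 q.2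
  have hy : ∀ p q, y p ⬝ᵥ y q = 2 + if p = q then 2 else 0 := fun p q => by
    simpa only [← Subtype.ext_iff] using
      sub_dotProduct_sub_of_pattern hT.single_sub_single_dotProduct p.2 q.2
  have hcard' : Fintype.card {p : T // p ≠ ⟨p₀, hp₀⟩} = #T - 1 := by
    simp [Fintype.card_subtype_compl]
  have : Nonempty {p : T // p ≠ ⟨p₀, hp₀⟩} := Fintype.card_pos_iff.mp (by omega)
  have hc' : (c : ℝ) ≤ 2 := by exact_mod_cast hc
  rw [← hcard']
  exact le_distEig_of_pattern G hDy hy zero_le_two two_pos (by linarith) (by linarith)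

end DistanceEigenvalueBounds

theorem kth_largest_distance_eigenvalue_ge_neg_two :
    ∀ k : ℕ, 2 ≤ k → ∃ N : ℕ, ∀ n : ℕ, N ≤ n →
      ∀ G : SimpleGraph (Fin n), G.Connected →
        distEig G k ≥ -2 := by
  intro k hk
  obtain ⟨R, hR⟩ := exists_subset_crossDist_eq (k + 1)
  refine ⟨2 * (R + 1) * (k + 1), fun n hn G hG => ?_⟩
  obtain ⟨P, hP, hPind⟩ := exists_isOrientedMatching_not_adj G
  by_cases hRP : R ≤ #P
  · obtain ⟨T, hTP, hTcard, c, hc, hcross⟩ := hR hG P hP.1 hRP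
    simpa [hTcard] using
      neg_two_le_distEig_of_isOrientedMatching G (hP.subset hTP) (by omega) hc hcross
  · have : Nontrivial (Fin n) := Fin.nontrivial_iff_two_le.mpr (by nlinarith)
    set S := P.biUnion fun p => {p.1, p.2}
    have hS : #S ≤ #P * 2 := card_biUnion_le_card_mul _ _ _ fun p _ => card_le_two
    have hSc : #S * k < #Sᶜ := by
      have : #S * (k + 1) < n := by nlinarith [Nat.mul_le_mul_right (k + 1) hS]
      rw [card_compl, Fintype.card_fin]
      rw [mul_add_one] at this
      omega
    obtain ⟨w, L, hL, hadj, hind⟩ := exists_star_of_not_adj hG hPind hSc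
    simpa [hL] using neg_two_le_distEig_of_star G w (card_pos.mp (by omega)) hadj hind
end

section
/- Let G be a connected bipartite simple graph on n vertices with bipartition classes of sizes r and n − r and with m edges. Then the largest distance eigenvalue satisfies λ₁(D(G)) ≥ 2(n² + (r−1)n − r² − 2m)/n. -/
/-!
By Rayleigh's principle applied to the all-ones vector, `n λ₁(D(G)) ≥ ∑_{u,v} d(u,v)`.
In a connected graph with bipartition `V₁ ⊔ V₂`, two distinct vertices are at distance `1` when
adjacent, at least `2` when on the same side, and at least `3` when on opposite sides but not
adjacent, since a shortest path between them has odd length. Summing these bounds over the `n²`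
ordered pairs gives `3n² - 4m - (r² + (n - r)²) - 2n = 2(n² + (r - 1)n - r² - 2m)`.
-/

open Finset SimpleGraph

open Matrix

theorem List.Pairwise.le_getD_zero {α : Type*} [Preorder α] {l : List α}
    (hl : l.Pairwise (· ≥ ·)) {a : α} (ha : a ∈ l) (d : α) : a ≤ l.getD 0 d := by
  rw [List.getD_eq_getElem _ _ (List.length_pos_of_mem ha), ← List.head_eq_getElem]
  exact hl.rel_head ha

theorem Matrix.IsHermitian.dotProduct_mulVec_le {ι : Type*} [Fintype ι] [DecidableEq ι]
    {A : Matrix ι ι ℝ} (hA : A.IsHermitian) {c : ℝ} (hc : ∀ i, hA.eigenvalues i ≤ c)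
    (x : ι → ℝ) : x ⬝ᵥ A *ᵥ x ≤ c * (x ⬝ᵥ x) := by
  have hB : (algebraMap ℝ (Matrix ι ι ℝ) c - A).IsHermitian := by
    rw [Algebra.algebraMap_eq_smul_one]
    exact (isHermitian_one.smul (IsSelfAdjoint.all c)).sub hA
  have hpsd : (algebraMap ℝ (Matrix ι ι ℝ) c - A).PosSemidef := by
    refine hB.posSemidef_iff_eigenvalues_nonneg.mpr fun i => ?_
    have hi := hB.eigenvalues_mem_spectrum_real i
    rw [← spectrum.singleton_sub_eq, hA.spectrum_real_eq_range_eigenvalues] at hi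
    obtain ⟨_, rfl, _, ⟨j, rfl⟩, hij⟩ := hi
    simpa [← hij] using hc j
  simpa [sub_mulVec, dotProduct_sub, Algebra.algebraMap_eq_smul_one, smul_mulVec, dotProduct_smul]
    using hpsd.re_dotProduct_nonneg x

theorem distMatrix_isHermitian {n : ℕ} (G : SimpleGraph (Fin n)) :
    (distMatrix G).IsHermitian := by
  ext i j
  simp [distMatrix, G.dist_comm]

theorem eigenvalues_le_distEig_one {n : ℕ} {G : SimpleGraph (Fin n)}
    (hD : (distMatrix G).IsHermitian) (i : Fin n) : hD.eigenvalues i ≤ distEig G 1 := by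
  rw [distEig, distEigList, dif_pos hD]
  exact (List.pairwise_insertionSort _ _).le_getD_zero
    ((List.perm_insertionSort _ _).mem_iff.mpr (List.mem_ofFn.mpr ⟨i, rfl⟩)) 0

theorem Finset.sum_sum_ite_mem_iff_mem {V : Type*} [Fintype V] [DecidableEq V] (S : Finset V) :
    ∑ u, ∑ v, (if (u ∈ S ↔ v ∈ S) then 1 else 0 : ℝ) =
      #S ^ 2 + (Fintype.card V - #S) ^ 2 := by
  set a : V → ℝ := fun w => if w ∈ S then 1 else 0
  have hsplit : ∀ u v, (if (u ∈ S ↔ v ∈ S) then 1 else 0 : ℝ) =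
      a u * a v + (1 - a u) * (1 - a v) := by
    intro u v
    by_cases hu : u ∈ S <;> by_cases hv : v ∈ S <;> simp [a, hu, hv]
  have hsum : ∑ w, a w = #S := by simp [a]
  simp only [hsplit, Finset.sum_add_distrib, ← Finset.sum_mul_sum, Finset.sum_sub_distrib, hsum]
  simp
  ring

namespace SimpleGraph

variable {V : Type*} {G : SimpleGraph V}

theorem sum_sum_adj_eq_two_mul_card_edgeFinset [Fintype V] [DecidableRel G.Adj] :
    ∑ u, ∑ v, (if G.Adj u v then 1 else 0 : ℝ) = 2 * #G.edgeFinset := by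
  simp only [Finset.sum_boole, ← neighborFinset_eq_filter, card_neighborFinset_eq_degree]
  exact_mod_cast G.sum_degrees_eq_twice_card_edges

theorem Connected.three_le_dist_of_not_adj (hG : G.Connected) (c : G.Coloring Bool) {u v : V}
    (huv : c u ≠ c v) (hadj : ¬G.Adj u v) : 3 ≤ G.dist u v := by
  obtain ⟨p, hp⟩ := hG.exists_walk_length_eq_dist u v
  have hodd : Odd p.length :=
    (c.odd_length_iff_not_congr p).mpr (by simpa [Bool.eq_not_iff] using huv)
  have hne : u ≠ v := by rintro rfl; exact huv rfl
  have hlt := hG.one_lt_dist_of_ne_of_not_adj hne hadj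
  rw [hp] at hodd
  obtain ⟨k, hk⟩ := hodd
  omega

/-- The left-hand side is `0`, `1`, `2` or `3` according as `u = v`, `u` and `v` are adjacent,
`u ≠ v` lie on the same side, or `u` and `v` lie on opposite sides without being adjacent. -/
theorem Connected.le_dist_of_bipartition [DecidableEq V] [DecidableRel G.Adj] (hG : G.Connected)
    {S : Finset V} (hS : ∀ u v, G.Adj u v → (u ∈ S ↔ v ∉ S)) (u v : V) :
    3 - 2 * (if G.Adj u v then 1 else 0) - (if (u ∈ S ↔ v ∈ S) then 1 else 0)
      - 2 * (if u = v then 1 else 0) ≤ (G.dist u v : ℝ) := by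
  rcases eq_or_ne u v with rfl | hne
  · norm_num
  by_cases hadj : G.Adj u v
  · norm_num [hadj, hne, dist_eq_one_iff_adj.mpr hadj, hS u v hadj]
  by_cases hside : u ∈ S ↔ v ∈ S
  · have h2 : (2 : ℝ) ≤ G.dist u v := by
      exact_mod_cast hG.one_lt_dist_of_ne_of_not_adj hne hadj
    simp only [hadj, hside, hne, if_true, if_false]
    linarith
  · let c : G.Coloring Bool := Coloring.mk (fun w => decide (w ∈ S)) fun {a b} hab => by
      have hab' := hS a b hab
      simp only [ne_eq, decide_eq_decide]
      tauto
    have h3 : (3 : ℝ) ≤ G.dist u v := by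
      exact_mod_cast hG.three_le_dist_of_not_adj c
        (show decide (u ∈ S) ≠ decide (v ∈ S) by simpa using hside) hadj
    simp only [hadj, hside, hne, if_false]
    linarith

theorem Connected.sum_sum_dist_ge_of_bipartition [Fintype V] [DecidableEq V] [DecidableRel G.Adj]
    (hG : G.Connected) {S : Finset V} (hS : ∀ u v, G.Adj u v → (u ∈ S ↔ v ∉ S)) :
    3 * (Fintype.card V : ℝ) ^ 2 - 4 * #G.edgeFinset - (#S ^ 2 + (Fintype.card V - #S) ^ 2)
      - 2 * Fintype.card V ≤ ∑ u, ∑ v, (G.dist u v : ℝ) := by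
  calc _ = ∑ u, ∑ v, (3 - 2 * (if G.Adj u v then 1 else 0) - (if (u ∈ S ↔ v ∈ S) then 1 else 0)
          - 2 * (if u = v then 1 else 0) : ℝ) := by
        simp only [Finset.sum_sub_distrib, ← Finset.mul_sum,
          G.sum_sum_adj_eq_two_mul_card_edgeFinset, S.sum_sum_ite_mem_iff_mem]
        simp
        ring
    _ ≤ _ := Finset.sum_le_sum fun u _ => Finset.sum_le_sum fun v _ =>
        hG.le_dist_of_bipartition hS u v

end SimpleGraph

theorem largest_distance_eigenvalue_bipartite_lower_bound {n r : ℕ}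
    (G : SimpleGraph (Fin n)) [DecidableRel G.Adj] (hG : G.Connected)
    (V₁ : Finset (Fin n)) (hr : V₁.card = r)
    (hbip : ∀ u v, G.Adj u v → (u ∈ V₁ ↔ v ∉ V₁)) :
    distEig G 1 ≥
      2 * ((n : ℝ) ^ 2 + ((r : ℝ) - 1) * n - (r : ℝ) ^ 2
        - 2 * (G.edgeFinset.card : ℝ)) / n := by
  have hn : (0 : ℝ) < n := by exact_mod_cast Fin.pos_iff_nonempty.mpr hG.nonempty
  have hD := distMatrix_isHermitian G
  have hRayleigh : ∑ u, ∑ v, (G.dist u v : ℝ) ≤ distEig G 1 * n := by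
    simpa [dotProduct, mulVec, distMatrix, Finset.mul_sum]
      using hD.dotProduct_mulVec_le (eigenvalues_le_distEig_one hD) 1
  have hsum := hG.sum_sum_dist_ge_of_bipartition hbip
  rw [Fintype.card_fin, hr] at hsum
  rw [ge_iff_le, div_le_iff₀ hn]
  linarith
end
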